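/- Let X be a finite metric space with distance d, let s : Finset X → ℝ be a non-negative monotone submodular set function, λ > 0, n ≥ 1, α ∈ (0,1], and let ã := (1/2)·s + λ·div. Let x₀, …, x_{n−1} be pairwise distinct elements of X forming an α-approximate greedy sequence for the set function ã, with partial sets B_i and output B_n (so |B_i| = i). Then for every B* ⊆ X with |B*| = n, s(B_n) + λ·div(B_n) ≥ (α/2)·(s(B*) + λ·div(B*)). -/

import Mathlib

open Finset

/-- `d(A,B) = Σ_{x∈A} Σ_{x'∈B} d(x,x')`. -/
noncomputable def setDist {X : Type*} [MetricSpace X] (A B : Finset X) : ℝ :=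
  ∑ x ∈ A, ∑ x' ∈ B, dist x x'

/-- Sum-dispersion `div(B) = (1/2)·d(B,B)`. -/
noncomputable def sumDisp {X : Type*} [MetricSpace X] (B : Finset X) : ℝ :=
  (1 / 2) * setDist B B

/-- Marginal gain `Δ_a(x ∣ B) = a(B ∪ {x}) − a(B)`. -/
noncomputable def margGain {X : Type*} [DecidableEq X] (a : Finset X → ℝ) (x : X)
    (B : Finset X) : ℝ :=
  a (insert x B) - a B

/-- The partial set `B_i = {x₀, …, x_{i−1}}` of a sequence `xs`. -/
def partialSet {X : Type*} [DecidableEq X] {n : ℕ} (xs : Fin n → X) (i : ℕ) : Finset X :=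
  (Finset.univ.filter (fun j : Fin n => (j : ℕ) < i)).image xs

/-!
Write `O` for `B*` and compare the `i`-th greedy point with all points of `O \ B_i`, of which
there are between `1` and `n`. By submodularity their gains in `s` add up to at least
`s(B_i ∪ O) - s(B_i) ≥ s(O) - s(B_n)`, and their gains in `div` add up to `d(O \ B_i, B_i)`,
which a count of triangle inequalities bounds below by `i |O \ B_i| div(O) / (n (n - 1))`.
Hence the `i`-th gain of `ã` is at least `α ((s(O) - s(B_n)) / (2n) + λ i div(O) / (n (n - 1)))`;
summing over `i < n` gives `ã(B_n) ≥ (α/2) (s(O) - s(B_n) + λ div(O))`, and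
`(α/2) s(B_n) ≤ s(B_n)/2` closes the gap.
-/

section Dispersion

variable {X : Type*} [MetricSpace X]

lemma setDist_nonneg (A B : Finset X) : 0 ≤ setDist A B :=
  sum_nonneg fun _ _ => sum_nonneg fun _ _ => dist_nonneg

lemma setDist_comm (A B : Finset X) : setDist A B = setDist B A := by
  rw [setDist, setDist, sum_comm]
  simp only [dist_comm]

lemma setDist_singleton_left (x : X) (B : Finset X) : setDist {x} B = ∑ b ∈ B, dist x b := by
  simp [setDist]

lemma setDist_union_left [DecidableEq X] {A B : Finset X} (h : Disjoint A B) (C : Finset X) :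
    setDist (A ∪ B) C = setDist A C + setDist B C :=
  sum_union h

lemma setDist_union_right [DecidableEq X] (A : Finset X) {B C : Finset X} (h : Disjoint B C) :
    setDist A (B ∪ C) = setDist A B + setDist A C := by
  rw [setDist_comm, setDist_union_left h, setDist_comm B, setDist_comm C]

lemma sumDisp_union [DecidableEq X] {A B : Finset X} (h : Disjoint A B) :
    sumDisp (A ∪ B) = sumDisp A + setDist A B + sumDisp B := by
  simp only [sumDisp, setDist_union_left h, setDist_union_right _ h, setDist_comm B A]
  ring

lemma sumDisp_insert [DecidableEq X] {x : X} {B : Finset X} (hx : x ∉ B) :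
    sumDisp (insert x B) = sumDisp B + ∑ b ∈ B, dist x b := by
  rw [insert_eq, sumDisp_union (disjoint_singleton_left.2 hx), setDist_singleton_left]
  simp [sumDisp, setDist, add_comm]

lemma sumDisp_eq_zero_of_card_le_one {B : Finset X} (hB : B.card ≤ 1) : sumDisp B = 0 := by
  have hsub := card_le_one.1 hB
  simp only [sumDisp, setDist]
  rw [sum_eq_zero fun x hx => sum_eq_zero fun y hy => by rw [hsub x hx y hy, dist_self]]
  simp

/-- Sum `d(x,y) ≤ d(x,v) + d(v,y)` over all ordered pairs of `U`: on the diagonal the left side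
is `0` and the right side `2 d(x,v)`, which accounts for the `- 1`. -/
lemma setDist_self_le (U : Finset X) (v : X) :
    setDist U U ≤ 2 * ((U.card : ℝ) - 1) * ∑ x ∈ U, dist x v := by
  classical
  have hpair : ∀ x ∈ U, ∀ y ∈ U,
      dist x y + (if x = y then 2 * dist x v else 0) ≤ dist x v + dist v y := by
    intro x _ y _
    split_ifs with hxy
    · subst hxy
      rw [dist_self, dist_comm v x]
      linarith
    · simpa using dist_triangle x v y
  have hsum := sum_le_sum fun x hx => sum_le_sum (hpair x hx)
  simp only [sum_add_distrib, sum_ite_eq, sum_const, nsmul_eq_mul] at hsum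
  rw [sum_ite_of_true fun x hx => hx, ← mul_sum, ← mul_sum] at hsum
  have hsymm : ∑ x ∈ U, dist v x = ∑ x ∈ U, dist x v := sum_congr rfl fun x _ => dist_comm v x
  rw [setDist]
  linear_combination hsum + (U.card : ℝ) * hsymm

lemma card_mul_sumDisp_le (U V : Finset X) :
    (V.card : ℝ) * sumDisp U ≤ ((U.card : ℝ) - 1) * setDist U V := by
  have hsum := sum_le_sum fun v (_ : v ∈ V) => setDist_self_le U v
  rw [sum_const, nsmul_eq_mul, ← mul_sum, sum_comm] at hsum
  change _ ≤ _ * setDist U V at hsum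
  rw [sumDisp]
  linarith

/-- With `A = O \ S`, `C = O ∩ S`, `E = S \ O`, `card_mul_sumDisp_le` bounds `div C` by `d(A,C)`
and `div A` both by `d(A,C)` and by `d(A,E)`; weighting the last two by `|O| - |S|` and `|O|`
makes their left sides add up to exactly `|S| |A| div A`. -/
lemma card_mul_card_sdiff_mul_sumDisp_le [DecidableEq X] {O S : Finset X}
    (hSO : S.card ≤ O.card) :
    (S.card : ℝ) * (O \ S).card * sumDisp O ≤
      O.card * ((O.card : ℝ) - 1) * setDist (O \ S) S := by
  set A := O \ S
  set C := O ∩ S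
  set E := S \ O
  have hO : A ∪ C = O := sdiff_union_inter O S
  have hS : C ∪ E = S := by ext; simp only [C, E, mem_union, mem_inter, mem_sdiff]; tauto
  have hAC : Disjoint A C := disjoint_sdiff_inter O S
  have hCE : Disjoint C E := disjoint_left.2 fun x hC hE => (mem_sdiff.1 hE).2 (mem_inter.1 hC).1
  have hcardO : (A.card : ℝ) + C.card = O.card := by
    rw [← hO, card_union_of_disjoint hAC]; push_cast; ring
  have hcardS : (C.card : ℝ) + E.card = S.card := by
    rw [← hS, card_union_of_disjoint hCE]; push_cast; ring
  have hdivO : sumDisp O = sumDisp A + setDist A C + sumDisp C := by rw [← hO, sumDisp_union hAC]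
  have hdAS : setDist A S = setDist A C + setDist A E := by rw [← hS, setDist_union_right A hCE]
  have hC := card_mul_sumDisp_le C A
  have hAC' := card_mul_sumDisp_le A C
  have hAE := card_mul_sumDisp_le A E
  rw [setDist_comm C A] at hC
  have hEA : (E.card : ℝ) ≤ A.card := by
    have : (S.card : ℝ) ≤ O.card := by exact_mod_cast hSO
    linarith
  have hdivA : (C.card + E.card : ℝ) * A.card * sumDisp A ≤
      (A.card + C.card - 1) * ((A.card - E.card) * setDist A C + (A.card + C.card) * setDist A E) := by
    have hw : 0 ≤ (A.card - E.card) * setDist A C + (A.card + C.card) * setDist A E :=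
      add_nonneg (mul_nonneg (by linarith) (setDist_nonneg A C))
        (mul_nonneg (by positivity) (setDist_nonneg A E))
    linear_combination mul_le_mul_of_nonneg_left hAC' (by linarith : (0 : ℝ) ≤ A.card - E.card)
      + mul_le_mul_of_nonneg_left hAE (by positivity : (0 : ℝ) ≤ A.card + C.card)
      + mul_le_mul_of_nonneg_right (by linarith : (A.card : ℝ) - 1 ≤ A.card + C.card - 1) hw
  rw [hdivO, hdAS, ← hcardO, ← hcardS]
  linear_combination hdivA + mul_le_mul_of_nonneg_left hC (by positivity : (0 : ℝ) ≤ C.card + E.card)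

/-- For `n ≤ 1` both sides vanish, the left one through division by zero. -/
lemma sum_fin_mul_sumDisp_div {O : Finset X} {n : ℕ}
    (hO : O.card = n) :
    ∑ i : Fin n, (i : ℝ) * sumDisp O / (n * (n - 1)) = sumDisp O / 2 := by
  rcases le_or_gt n 1 with hn | hn
  · simp [sumDisp_eq_zero_of_card_le_one (hO ▸ hn)]
  · have hgauss : (∑ i : Fin n, (i : ℝ)) * 2 = n * (n - 1) := by
      rw [Fin.sum_univ_eq_sum_range (fun i => (i : ℝ)), ← Nat.cast_sum, ← Nat.cast_ofNat,
        ← Nat.cast_mul, sum_range_id_mul_two, Nat.cast_mul, Nat.cast_pred (by omega)]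
    have hpos : (0 : ℝ) < n * (n - 1) := by
      have : (1 : ℝ) < n := by exact_mod_cast hn
      nlinarith
    rw [← sum_div, ← sum_mul, div_eq_div_iff hpos.ne' two_ne_zero, ← hgauss]
    ring

end Dispersion

section SetFunction

variable {X : Type*} [DecidableEq X] (s : Finset X → ℝ)

lemma monotone_of_margGain_nonneg (hs_mono : ∀ (B : Finset X) (x : X), 0 ≤ margGain s x B) :
    Monotone s :=
  monotone_iff_forall_le_insert.2 fun B x _ => sub_nonneg.1 (hs_mono B x)

lemma le_add_sum_margGain
    (hs_submod : ∀ B' B : Finset X, B' ⊆ B → ∀ x : X, x ∉ B →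
      margGain s x B ≤ margGain s x B')
    (S A : Finset X) : s (S ∪ A) ≤ s S + ∑ x ∈ A, margGain s x S := by
  induction A using Finset.induction_on with
  | empty => simp
  | @insert a A ha ih =>
    rw [union_insert, sum_insert ha]
    by_cases haS : a ∈ S
    · rw [insert_eq_of_mem (mem_union_left A haS)]
      have : margGain s a S = 0 := by rw [margGain, insert_eq_of_mem haS, sub_self]
      linarith
    · have : s (insert a (S ∪ A)) - s (S ∪ A) ≤ margGain s a S :=
        hs_submod S (S ∪ A) subset_union_left a (by simp [haS, ha])
      linarith

end SetFunction

section PartialSet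

variable {X : Type*} [DecidableEq X] {n : ℕ} (xs : Fin n → X)

lemma partialSet_zero : partialSet xs 0 = ∅ := by
  simp [partialSet]

lemma partialSet_succ (i : Fin n) :
    partialSet xs (i + 1) = insert (xs i) (partialSet xs i) := by
  ext y
  simp only [partialSet, mem_insert, mem_image, mem_filter, mem_univ, true_and,
    Nat.lt_succ_iff_lt_or_eq, Fin.val_inj, or_and_right, exists_or, exists_eq_left, @eq_comm _ y]
  exact or_comm

lemma partialSet_mono {i j : ℕ} (hij : i ≤ j) : partialSet xs i ⊆ partialSet xs j :=
  image_subset_image <| monotone_filter_right _ fun _ _ h => h.trans_le hij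

lemma card_partialSet (hxs : Function.Injective xs) {i : ℕ} (hi : i ≤ n) :
    (partialSet xs i).card = i := by
  rw [partialSet, card_image_of_injective _ hxs, Fin.card_filter_val_lt, min_eq_right hi]

lemma sum_margGain_partialSet (a : Finset X → ℝ) :
    ∑ i : Fin n, margGain a (xs i) (partialSet xs i) = a (partialSet xs n) - a ∅ := by
  simp only [margGain, ← partialSet_succ]
  rw [Fin.sum_univ_eq_sum_range (fun i => a (partialSet xs (i + 1)) - a (partialSet xs i)),
    sum_range_sub (fun i => a (partialSet xs i)), partialSet_zero]

end PartialSet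

section Greedy

variable {X : Type*} [MetricSpace X] [DecidableEq X] {s : Finset X → ℝ} {lam : ℝ}

/-- The objective `ã` of the greedy algorithm. -/
noncomputable def diversified (s : Finset X → ℝ) (lam : ℝ) (C : Finset X) : ℝ :=
  (1 / 2) * s C + lam * sumDisp C

lemma margGain_diversified {x : X} {B : Finset X} (hx : x ∉ B) :
    margGain (diversified s lam) x B = (1 / 2) * margGain s x B + lam * ∑ b ∈ B, dist x b := by
  simp only [margGain, diversified, sumDisp_insert hx]
  ring

lemma sumDisp_div_le_setDist_sdiff_div {O S : Finset X} (hSO : S.card < O.card) :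
    S.card * sumDisp O / (O.card * (O.card - 1)) ≤ setDist (O \ S) S / (O \ S).card := by
  have hA : (0 : ℝ) < (O \ S).card := by
    exact_mod_cast (sdiff_nonempty_of_card_lt_card hSO).card_pos
  have hO : (1 : ℝ) ≤ O.card := by exact_mod_cast (by omega : 1 ≤ O.card)
  rcases (mul_nonneg (by positivity) (by linarith) : (0 : ℝ) ≤ O.card * (O.card - 1)).eq_or_lt
    with h0 | hpos
  · rw [← h0, div_zero]
    exact div_nonneg (setDist_nonneg _ _) hA.le
  · rw [div_le_div_iff₀ hpos hA]
    linarith [card_mul_card_sdiff_mul_sumDisp_le hSO.le]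

lemma greedy_step_bound
    (hs_mono : ∀ (B : Finset X) (x : X), 0 ≤ margGain s x B)
    (hs_submod : ∀ B' B : Finset X, B' ⊆ B → ∀ x : X, x ∉ B →
      margGain s x B ≤ margGain s x B')
    (hlam : 0 ≤ lam) {α : ℝ} (hα : 0 ≤ α) {O S : Finset X} {y : X} (hSO : S.card < O.card)
    (hy : ∀ x, x ∉ S → α * margGain (diversified s lam) x S ≤ margGain (diversified s lam) y S) :
    α * ((s (S ∪ O) - s S) / (2 * O.card) + lam * (S.card * sumDisp O / (O.card * (O.card - 1))))
      ≤ margGain (diversified s lam) y S := by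
  set A := O \ S
  have hA : (0 : ℝ) < A.card := by exact_mod_cast (sdiff_nonempty_of_card_lt_card hSO).card_pos
  have hAO : (A.card : ℝ) ≤ O.card := by exact_mod_cast card_le_card sdiff_subset
  have hG : 0 ≤ s (S ∪ O) - s S :=
    sub_nonneg.2 (monotone_of_margGain_nonneg s hs_mono subset_union_left)
  have hsub : s (S ∪ O) - s S ≤ ∑ x ∈ A, margGain s x S := by
    have := le_add_sum_margGain s hs_submod S A
    rw [union_sdiff_self_eq_union] at this
    linarith
  have hgain : ∑ x ∈ A, margGain (diversified s lam) x S =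
      (1 / 2) * ∑ x ∈ A, margGain s x S + lam * setDist A S := by
    rw [setDist, mul_sum, mul_sum, ← sum_add_distrib]
    exact sum_congr rfl fun x hx => margGain_diversified (mem_sdiff.1 hx).2
  have hchoice : α * ∑ x ∈ A, margGain (diversified s lam) x S
      ≤ A.card * margGain (diversified s lam) y S := by
    rw [mul_sum, ← nsmul_eq_mul, ← sum_const]
    exact sum_le_sum fun x hx => hy x (mem_sdiff.1 hx).2
  calc α * ((s (S ∪ O) - s S) / (2 * O.card) + lam * (S.card * sumDisp O / (O.card * (O.card - 1))))
      ≤ α * ((s (S ∪ O) - s S) / (2 * A.card) + lam * (setDist A S / A.card)) := by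
        gcongr α * (?_ + lam * ?_)
        · exact div_le_div_of_nonneg_left hG (by positivity) (by linarith)
        · exact sumDisp_div_le_setDist_sdiff_div hSO
    _ ≤ α * ((∑ x ∈ A, margGain (diversified s lam) x S) / A.card) := by
        gcongr α * ?_
        rw [hgain]
        field_simp
        linarith
    _ ≤ margGain (diversified s lam) y S := by
        rw [← mul_div_assoc, div_le_iff₀ hA]
        linarith

end Greedy

theorem approx_greedy_diversified_submodular_bound_general
    {X : Type*} [MetricSpace X] [DecidableEq X]
    (s : Finset X → ℝ)
    (hs_nonneg : ∀ B : Finset X, 0 ≤ s B)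
    (hs_mono : ∀ (B : Finset X) (x : X), 0 ≤ margGain s x B)
    (hs_submod : ∀ B' B : Finset X, B' ⊆ B → ∀ x : X, x ∉ B →
      margGain s x B ≤ margGain s x B')
    (lam : ℝ) (hlam : 0 < lam)
    (n : ℕ) (hn : 1 ≤ n)
    (α : ℝ) (hα0 : 0 < α) (hα1 : α ≤ 1)
    (xs : Fin n → X) (hxs : Function.Injective xs)
    (hgreedy : ∀ i : Fin n, ∀ x : X, x ∉ partialSet xs i →
      α * margGain (fun C => (1 / 2) * s C + lam * sumDisp C) x (partialSet xs i) ≤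
        margGain (fun C => (1 / 2) * s C + lam * sumDisp C) (xs i) (partialSet xs i)) :
    ∀ Bstar : Finset X, Bstar.card = n →
      (α / 2) * (s Bstar + lam * sumDisp Bstar) ≤
        s (partialSet xs n) + lam * sumDisp (partialSet xs n) := by
  intro O hO
  have hmono := monotone_of_margGain_nonneg s hs_mono
  have hstep : ∀ i : Fin n,
      α * ((s O - s (partialSet xs n)) / (2 * n) + lam * (i * sumDisp O / (n * (n - 1)))) ≤
        margGain (diversified s lam) (xs i) (partialSet xs i) := by
    intro i
    have hcard : (partialSet xs i).card = i := card_partialSet xs hxs i.is_lt.le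
    have hSO : (partialSet xs i).card < O.card := by rw [hcard, hO]; exact i.is_lt
    have h := greedy_step_bound hs_mono hs_submod hlam.le hα0.le hSO (hgreedy i)
    rw [hcard, hO] at h
    refine le_trans ?_ h
    gcongr α * ((?_ - ?_) / _ + _)
    · exact hmono subset_union_right
    · exact hmono (partialSet_mono xs i.is_lt.le)
  have hweights : ∑ i : Fin n,
      ((s O - s (partialSet xs n)) / (2 * n) + lam * (i * sumDisp O / (n * (n - 1)))) =
        (s O - s (partialSet xs n)) / 2 + lam * (sumDisp O / 2) := by
    have hn0 : (n : ℝ) ≠ 0 := Nat.cast_ne_zero.2 (by omega)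
    rw [sum_add_distrib, ← mul_sum, sum_fin_mul_sumDisp_div hO, sum_const, card_univ,
      Fintype.card_fin, nsmul_eq_mul]
    field_simp
  have htotal := sum_le_sum fun i (_ : i ∈ univ) => hstep i
  rw [← mul_sum, hweights, sum_margGain_partialSet] at htotal
  have hempty : 0 ≤ diversified s lam ∅ := by
    simpa [diversified, sumDisp, setDist] using hs_nonneg ∅
  have hαBn := mul_le_of_le_one_left (hs_nonneg (partialSet xs n)) hα1
  rw [diversified] at htotal
  linarith

/-- diversified-subset-selection guarantee for submodular `s`:
running the α-approximate greedy algorithm on `ã = (1/2)·s + λ·div` returns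
`B_n` with `s(B_n) + λ·div(B_n) ≥ (α/2)·(s(B*) + λ·div(B*))`. -/
theorem approx_greedy_diversified_submodular_bound
    {X : Type*} [Fintype X] [MetricSpace X] [DecidableEq X]
    (s : Finset X → ℝ)
    (hs_nonneg : ∀ B : Finset X, 0 ≤ s B)
    (hs_mono : ∀ (B : Finset X) (x : X), 0 ≤ margGain s x B)
    (hs_submod : ∀ B' B : Finset X, B' ⊆ B → ∀ x : X, x ∉ B →
      margGain s x B ≤ margGain s x B')
    (lam : ℝ) (hlam : 0 < lam)
    (n : ℕ) (hn : 1 ≤ n)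
    (α : ℝ) (hα0 : 0 < α) (hα1 : α ≤ 1)
    (xs : Fin n → X) (hxs : Function.Injective xs)
    (hgreedy : ∀ i : Fin n, ∀ x : X, x ∉ partialSet xs i →
      α * margGain (fun C => (1 / 2) * s C + lam * sumDisp C) x (partialSet xs i) ≤
        margGain (fun C => (1 / 2) * s C + lam * sumDisp C) (xs i) (partialSet xs i)) :
    ∀ Bstar : Finset X, Bstar.card = n →
      (α / 2) * (s Bstar + lam * sumDisp Bstar) ≤
        s (partialSet xs n) + lam * sumDisp (partialSet xs n) :=
  approx_greedy_diversified_submodular_bound_general s hs_nonneg hs_mono hs_submod lam hlam n hn α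
    hα0 hα1 xs hxs hgreedy
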